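/- Let H be a finite-dimensional complex inner product space with anticommuting square-zero differentials ∂, ∂̄ and their adjoints ∂*, ∂̄*. Define Δ_A = ∂∂* + ∂̄∂̄* + (∂∂̄)*(∂∂̄) + (∂∂̄)(∂∂̄)* + (∂̄∂*)*(∂̄∂*) + (∂̄∂*)(∂̄∂*)*. Then x ∈ ker Δ_A if and only if ∂*x = 0, ∂̄*x = 0, and ∂∂̄ x = 0. -/

import Mathlib

/-!
Each of the six summands of `Δ_A` has the form `A B` with `A`, `B` formally adjoint, so
`Re ⟪Δ_A x, x⟫` is the sum of the squared norms of `∂* x`, `∂̄* x`, `∂∂̄ x`, `∂̄*∂* x`, `∂̄∂* x`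
and `∂∂̄* x`. Hence `Δ_A x = 0` forces all six to vanish, and conversely the last three vanish
as soon as `∂* x = ∂̄* x = ∂∂̄ x = 0`.
-/

/-- The Aeppli Laplacian
`Δ_A = ∂∂* + ∂̄∂̄* + (∂∂̄)*(∂∂̄) + (∂∂̄)(∂∂̄)* + (∂̄∂*)*(∂̄∂*) + (∂̄∂*)(∂̄∂*)*`,
with `p = ∂`, `q = ∂̄`, `ps = ∂*`, `qs = ∂̄*`. -/
def deltaA {H : Type*} [AddCommGroup H] [Module ℂ H]
    (p q ps qs : H →ₗ[ℂ] H) : H →ₗ[ℂ] H :=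
  p ∘ₗ ps + q ∘ₗ qs + (qs ∘ₗ ps) ∘ₗ (p ∘ₗ q) + (p ∘ₗ q) ∘ₗ (qs ∘ₗ ps)
    + (p ∘ₗ qs) ∘ₗ (q ∘ₗ ps) + (q ∘ₗ ps) ∘ₗ (p ∘ₗ qs)

open RCLike

/-- Unlike `LinearMap.adjoint`, this needs neither completeness nor finite dimension. -/
def IsFormalAdjoint {𝕜 H : Type*} [RCLike 𝕜] [NormedAddCommGroup H] [InnerProductSpace 𝕜 H]
    (T S : H →ₗ[𝕜] H) : Prop :=
  ∀ x y : H, inner 𝕜 (T x) y = inner 𝕜 x (S y)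

namespace IsFormalAdjoint

variable {𝕜 H : Type*} [RCLike 𝕜] [NormedAddCommGroup H] [InnerProductSpace 𝕜 H]
  {T S T' S' : H →ₗ[𝕜] H}

theorem symm (h : IsFormalAdjoint T S) : IsFormalAdjoint S T := fun x y => by
  rw [← inner_conj_symm, ← h, inner_conj_symm]

theorem comp (h : IsFormalAdjoint T S) (h' : IsFormalAdjoint T' S') :
    IsFormalAdjoint (T ∘ₗ T') (S' ∘ₗ S) := fun x y => by
  rw [LinearMap.comp_apply, LinearMap.comp_apply, h, h']

theorem re_inner_comp_apply_self (h : IsFormalAdjoint T S) (x : H) :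
    re (inner 𝕜 ((S ∘ₗ T) x) x) = ‖T x‖ ^ 2 := by
  rw [LinearMap.comp_apply, h.symm, inner_self_eq_norm_sq]

theorem re_inner_comp_apply_self' (h : IsFormalAdjoint T S) (x : H) :
    re (inner 𝕜 ((T ∘ₗ S) x) x) = ‖S x‖ ^ 2 :=
  h.symm.re_inner_comp_apply_self x

end IsFormalAdjoint

section Aeppli

variable {H : Type*} [NormedAddCommGroup H] [InnerProductSpace ℂ H] {p q ps qs : H →ₗ[ℂ] H}

theorem re_inner_deltaA_self (hps : IsFormalAdjoint p ps) (hqs : IsFormalAdjoint q qs) (x : H) :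
    re (inner ℂ (deltaA p q ps qs x) x) =
      ‖ps x‖ ^ 2 + ‖qs x‖ ^ 2 + ‖p (q x)‖ ^ 2 + ‖qs (ps x)‖ ^ 2 + ‖q (ps x)‖ ^ 2
        + ‖p (qs x)‖ ^ 2 := by
  have hpq : IsFormalAdjoint (p ∘ₗ q) (qs ∘ₗ ps) := hps.comp hqs
  have hqps : IsFormalAdjoint (q ∘ₗ ps) (p ∘ₗ qs) := hqs.comp hps.symm
  simp only [deltaA, LinearMap.add_apply, inner_add_left, map_add]
  rw [hps.re_inner_comp_apply_self', hqs.re_inner_comp_apply_self',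
    hpq.re_inner_comp_apply_self, hpq.re_inner_comp_apply_self',
    hqps.re_inner_comp_apply_self, hqps.re_inner_comp_apply_self']
  simp only [LinearMap.comp_apply]

theorem deltaA_apply_eq_zero_iff (hps : IsFormalAdjoint p ps) (hqs : IsFormalAdjoint q qs)
    (x : H) : deltaA p q ps qs x = 0 ↔ ps x = 0 ∧ qs x = 0 ∧ p (q x) = 0 := by
  constructor
  · intro h
    have hsum := re_inner_deltaA_self hps hqs x
    rw [h, inner_zero_left, map_zero] at hsum
    refine ⟨norm_eq_zero.mp ?_, norm_eq_zero.mp ?_, norm_eq_zero.mp ?_⟩ <;>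
      nlinarith [norm_nonneg (ps x), norm_nonneg (qs x), norm_nonneg (p (q x)), sq_nonneg ‖qs (ps x)‖, sq_nonneg ‖q (ps x)‖, sq_nonneg ‖p (qs x)‖]
  · rintro ⟨h₁, h₂, h₃⟩
    simp [deltaA, h₁, h₂, h₃]

end Aeppli

theorem stmt9_general {H : Type*} [NormedAddCommGroup H] [InnerProductSpace ℂ H]
    (p q ps qs : H →ₗ[ℂ] H)
    (hps : ∀ x y : H, (inner ℂ (p x) y : ℂ) = inner ℂ x (ps y))
    (hqs : ∀ x y : H, (inner ℂ (q x) y : ℂ) = inner ℂ x (qs y)) :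
    ∀ x : H, deltaA p q ps qs x = 0 ↔ (ps x = 0 ∧ qs x = 0 ∧ p (q x) = 0) :=
  deltaA_apply_eq_zero_iff hps hqs

/-- `x ∈ ker Δ_A` iff `∂* x = 0`, `∂̄* x = 0` and `∂∂̄ x = 0`. -/
theorem stmt9 {H : Type*} [NormedAddCommGroup H] [InnerProductSpace ℂ H]
    [FiniteDimensional ℂ H]
    (p q ps qs : H →ₗ[ℂ] H)
    (hp : p ∘ₗ p = 0) (hq : q ∘ₗ q = 0) (hpq : p ∘ₗ q + q ∘ₗ p = 0)
    (hps : ∀ x y : H, (inner ℂ (p x) y : ℂ) = inner ℂ x (ps y))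
    (hqs : ∀ x y : H, (inner ℂ (q x) y : ℂ) = inner ℂ x (qs y)) :
    ∀ x : H, deltaA p q ps qs x = 0 ↔ (ps x = 0 ∧ qs x = 0 ∧ p (q x) = 0) :=
  stmt9_general p q ps qs hps hqs
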